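/- Let N ∈ ℕ and let a : ℝⁿ → ℂ be bounded with compact support and ∫ xᵅ a(x) dx = 0 for all |α| ≤ N. Then |â(ξ)| ≤ C(a) min(1, |ξ|^{N+1}) for all ξ ∈ ℝⁿ, where C(a) depends only on a, its support, and N. -/

import Mathlib

/-!
Vanishing moments give `∫ ⟪x, ξ⟫ ^ m * a x = 0` for `m ≤ N` (expand `(∑ xᵢ ξᵢ) ^ m`
multinomially), so the degree-`N` Taylor polynomial of `exp (-2πi⟪x, ξ⟫)` can be subtracted inside
the Fourier integral. If `a` lives in `‖x‖ ≤ R` and `2πR‖ξ‖ ≤ 1`, the remainder is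
`O((2πR‖ξ‖) ^ (N + 1))`; for larger `ξ` the trivial bound `‖â‖ ≤ ‖a‖₁` is enough.
-/

open MeasureTheory Real Finset RealInnerProductSpace
open scoped FourierTransform

lemma le_mul_min_one_pow {y L K δ r : ℝ} {k : ℕ} (hδ : 0 < δ) (hδ1 : δ ≤ 1) (hr : 0 ≤ r)
    (hL : 0 ≤ L) (hK : 0 ≤ K) (hyL : y ≤ L) (hyK : r ≤ δ → y ≤ K * r ^ k) :
    y ≤ (K + L / δ ^ k) * min 1 (r ^ k) := by
  have hLδ : 0 ≤ L / δ ^ k := by positivity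
  rcases le_total r 1 with hr1 | hr1
  · rw [min_eq_right (pow_le_one₀ hr hr1)]
    rcases le_total r δ with hrδ | hδr
    · nlinarith [hyK hrδ, pow_nonneg hr k]
    · calc y ≤ L / δ ^ k * δ ^ k := by rwa [div_mul_cancel₀ _ (by positivity)]
        _ ≤ L / δ ^ k * r ^ k := by gcongr
        _ ≤ _ := by nlinarith [pow_nonneg hr k]
  · rw [min_eq_left (one_le_pow₀ hr1), mul_one]
    calc y ≤ L / 1 := by rwa [div_one]
      _ ≤ L / δ ^ k := by gcongr; exact pow_le_one₀ hδ.le hδ1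
      _ ≤ _ := by linarith

section Integrability

variable {X : Type*} [TopologicalSpace X] [MeasurableSpace X] {μ : Measure X} {f : X → ℂ}

lemma HasCompactSupport.integrable_of_bounded [IsFiniteMeasureOnCompacts μ]
    (hfc : HasCompactSupport f) (hfm : AEStronglyMeasurable f μ) {C : ℝ} (hC : ∀ x, ‖f x‖ ≤ C) :
    Integrable f μ :=
  (Measure.integrableOn_of_bounded hfc.isCompact.measure_lt_top.ne hfm
    (ae_of_all _ hC)).integrable_of_forall_notMem_eq_zero fun _ hx ↦
      image_eq_zero_of_notMem_tsupport hx

lemma MeasureTheory.Integrable.continuous_mul_of_hasCompactSupport [T2Space X]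
    [OpensMeasurableSpace X] {g : X → ℂ} (hg : Continuous g) (hf : Integrable f μ)
    (hfc : HasCompactSupport f) : Integrable (fun x ↦ g x * f x) μ :=
  (hf.integrableOn.continuousOn_mul hg.continuousOn hfc).integrable_of_forall_notMem_eq_zero
    fun _ hx ↦ by rw [image_eq_zero_of_notMem_tsupport hx, mul_zero]

end Integrability

lemma integral_inner_pow_mul_eq_zero {ι : Type*} [Fintype ι] [DecidableEq ι]
    {μ : Measure (EuclideanSpace ℝ ι)} {f : EuclideanSpace ℝ ι → ℂ} (hf : Integrable f μ)
    (hfc : HasCompactSupport f) {m : ℕ}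
    (hmom : ∀ α : ι → ℕ, ∑ i, α i = m → ∫ x, (∏ i, (x i : ℂ) ^ α i) * f x ∂μ = 0)
    (ξ : EuclideanSpace ℝ ι) :
    ∫ x, (⟪x, ξ⟫ : ℂ) ^ m * f x ∂μ = 0 := by
  have hexpand : ∀ x : EuclideanSpace ℝ ι, (⟪x, ξ⟫ : ℂ) ^ m * f x =
      ∑ α ∈ piAntidiag univ m, (Nat.multinomial univ α * ∏ i, (ξ i : ℂ) ^ α i) *
        ((∏ i, (x i : ℂ) ^ α i) * f x) := by
    intro x
    simp only [PiLp.inner_apply, RCLike.inner_apply, conj_trivial, Complex.ofReal_sum,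
      Complex.ofReal_mul]
    rw [sum_pow_eq_sum_piAntidiag, sum_mul]
    refine sum_congr rfl fun α _ ↦ ?_
    simp only [mul_pow, prod_mul_distrib]
    ring
  have hint : ∀ α : ι → ℕ, Integrable (fun x ↦ (∏ i, (x i : ℂ) ^ α i) * f x) μ := fun α ↦
    hf.continuous_mul_of_hasCompactSupport (by fun_prop) hfc
  simp_rw [hexpand]
  rw [integral_finsetSum _ fun α _ ↦ (hint α).const_mul _]
  refine sum_eq_zero fun α hα ↦ ?_
  rw [integral_const_mul, hmom α (mem_piAntidiag.mp hα).1, mul_zero]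

section FourierTransform

variable {V : Type*} [NormedAddCommGroup V] [InnerProductSpace ℝ V] [FiniteDimensional ℝ V]
  [MeasurableSpace V] [BorelSpace V] {f : V → ℂ} {k : ℕ} {ξ : V}

lemma fourier_eq_integral_exp_sub_sum_mul (hf : Integrable f) (hfc : HasCompactSupport f)
    (hmom : ∀ m < k, ∫ x, (⟪x, ξ⟫ : ℂ) ^ m * f x = 0) :
    𝓕 f ξ = ∫ x, (Complex.exp (↑(-2 * π * ⟪x, ξ⟫) * Complex.I) -
      ∑ m ∈ range k, (↑(-2 * π * ⟪x, ξ⟫) * Complex.I) ^ m / m.factorial) * f x := by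
  have hexpand : ∀ x, (∑ m ∈ range k,
      (↑(-2 * π * ⟪x, ξ⟫) * Complex.I) ^ m / m.factorial) * f x =
      ∑ m ∈ range k, ((-2 * π * Complex.I) ^ m / m.factorial) * ((⟪x, ξ⟫ : ℂ) ^ m * f x) := by
    intro x
    rw [sum_mul]
    refine sum_congr rfl fun m _ ↦ ?_
    push_cast
    ring
  have hint : ∀ m, Integrable (fun x ↦ (⟪x, ξ⟫ : ℂ) ^ m * f x) := fun m ↦
    hf.continuous_mul_of_hasCompactSupport (by fun_prop) hfc
  have htaylor_int : Integrable (fun x ↦ (∑ m ∈ range k,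
      (↑(-2 * π * ⟪x, ξ⟫) * Complex.I) ^ m / m.factorial) * f x) := by
    simp_rw [hexpand]
    exact integrable_finsetSum _ fun m _ ↦ (hint m).const_mul _
  have htaylor : ∫ x, (∑ m ∈ range k,
      (↑(-2 * π * ⟪x, ξ⟫) * Complex.I) ^ m / m.factorial) * f x = 0 := by
    simp_rw [hexpand]
    rw [integral_finsetSum _ fun m _ ↦ (hint m).const_mul _]
    refine sum_eq_zero fun m hm ↦ ?_
    rw [integral_const_mul, hmom m (mem_range.mp hm), mul_zero]
  have hexp : Integrable (fun x ↦ Complex.exp (↑(-2 * π * ⟪x, ξ⟫) * Complex.I) * f x) :=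
    hf.continuous_mul_of_hasCompactSupport (by fun_prop) hfc
  simp_rw [sub_mul]
  rw [integral_sub hexp htaylor_int, htaylor, sub_zero, Real.fourier_eq']
  rfl

-- `k.succ * (k! * k)⁻¹` is the remainder constant of `Complex.exp_bound`.
lemma norm_fourier_le_of_moments_eq_zero (hf : Integrable f) {R : ℝ} (hR : 0 < R)
    (hfR : tsupport f ⊆ Metric.closedBall 0 R) (hk : 0 < k)
    (hmom : ∀ m < k, ∫ x, (⟪x, ξ⟫ : ℂ) ^ m * f x = 0) (hξ : ‖ξ‖ ≤ (2 * π * R)⁻¹) :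
    ‖𝓕 f ξ‖ ≤ (2 * π * R) ^ k * ((k.succ : ℝ) * (k.factorial * k : ℝ)⁻¹) * (∫ x, ‖f x‖) *
      ‖ξ‖ ^ k := by
  set c : ℝ := (k.succ : ℝ) * (k.factorial * k : ℝ)⁻¹
  have hfc : HasCompactSupport f := (isCompact_closedBall 0 R).of_isClosed_subset
    (isClosed_tsupport f) hfR
  have hpoint : ∀ x, ‖(Complex.exp (↑(-2 * π * ⟪x, ξ⟫) * Complex.I) -
      ∑ m ∈ range k, (↑(-2 * π * ⟪x, ξ⟫) * Complex.I) ^ m / m.factorial) * f x‖ ≤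
      (2 * π * R) ^ k * c * ‖ξ‖ ^ k * ‖f x‖ := by
    intro x
    by_cases hx : x ∈ tsupport f
    · have hxR : ‖x‖ ≤ R := mem_closedBall_zero_iff.mp (hfR hx)
      have hphase : ‖(↑(-2 * π * ⟪x, ξ⟫) * Complex.I : ℂ)‖ ≤ 2 * π * R * ‖ξ‖ := by
        rw [norm_mul, Complex.norm_I, mul_one, Complex.norm_real, norm_mul, norm_mul]
        simp only [norm_neg, Real.norm_ofNat, Real.norm_eq_abs, abs_of_pos pi_pos]
        calc _ ≤ 2 * π * (‖x‖ * ‖ξ‖) := by gcongr; exact abs_real_inner_le_norm x ξ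
          _ ≤ 2 * π * (R * ‖ξ‖) := by gcongr
          _ = _ := by ring
      have hsmall : 2 * π * R * ‖ξ‖ ≤ 1 := by
        calc 2 * π * R * ‖ξ‖ ≤ 2 * π * R * (2 * π * R)⁻¹ := by gcongr
          _ = 1 := mul_inv_cancel₀ (by positivity)
      rw [norm_mul]
      gcongr
      calc _ ≤ _ := Complex.exp_bound (hphase.trans hsmall) hk
        _ ≤ (2 * π * R * ‖ξ‖) ^ k * c := by gcongr
        _ = _ := by ring
    · rw [image_eq_zero_of_notMem_tsupport hx, mul_zero, norm_zero]; positivity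
  rw [fourier_eq_integral_exp_sub_sum_mul hf hfc hmom]
  calc _ ≤ ∫ x, (2 * π * R) ^ k * c * ‖ξ‖ ^ k * ‖f x‖ :=
        norm_integral_le_of_norm_le (hf.norm.const_mul _) (ae_of_all _ hpoint)
    _ = _ := by rw [integral_const_mul]; ring

end FourierTransform

theorem stmt17 (n N : ℕ) (a : EuclideanSpace ℝ (Fin n) → ℂ)
    (ham : Measurable a) (hab : ∃ C : ℝ, ∀ x, ‖a x‖ ≤ C)
    (hac : HasCompactSupport a)
    (hmom : ∀ α : Fin n → ℕ, (∑ i, α i) ≤ N →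
      ∫ x : EuclideanSpace ℝ (Fin n), (∏ i, (x i : ℂ) ^ (α i)) * a x = 0) :
    ∃ C : ℝ, ∀ ξ : EuclideanSpace ℝ (Fin n),
      ‖FourierTransform.fourier a ξ‖ ≤ C * min 1 (‖ξ‖ ^ (N + 1)) := by
  obtain ⟨M, hM⟩ := hab
  obtain ⟨R, hR1, hR⟩ := hac.isBounded.subset_closedBall_lt 1 0
  have ha : Integrable a := hac.integrable_of_bounded ham.aestronglyMeasurable hM
  have hδ1 : (2 * π * R)⁻¹ ≤ 1 := inv_le_one_of_one_le₀ (by nlinarith [pi_gt_three])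
  exact ⟨_, fun ξ ↦ le_mul_min_one_pow (by positivity) hδ1 (norm_nonneg ξ)
    (integral_nonneg fun x ↦ norm_nonneg (a x)) (by positivity)
    (VectorFourier.norm_fourierIntegral_le_integral_norm _ _ _ _ _)
    (norm_fourier_le_of_moments_eq_zero ha (by linarith) hR N.succ_pos fun m hm ↦
      integral_inner_pow_mul_eq_zero ha hac (fun α hα ↦ hmom α (by omega)) ξ)⟩
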